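/- Let D̄ be the closed modular triangle, γ a Jordan curve with trace in D̄ of positive Lebesgue measure satisfying min{Re z : z ∈ tr γ} = −1/2 and max{Re z : z ∈ tr γ} < 1/2, T(z) = z + 1, and F := (D̄ \ int γ) ∪ T(tr γ ∪ int γ). Then μ(F) = μ(D̄) + μ(tr γ) > μ(D̄), where μ is hyperbolic area. -/

import Mathlib

/-! `D̄ᶜ` is connected and unbounded while `int γ` is bounded, so `D̄ᶜ` lies in the exterior of `γ`
and `int γ ⊆ D̄`. The translation `T` preserves `μ`, and `T(tr γ ∪ int γ) ⊆ T(D̄)` meets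
`D̄ \ int γ` only on the null line `Re z = 1/2`. Hence
`μ F = μ(D̄ \ int γ) + μ(tr γ) + μ(int γ) = μ D̄ + μ(tr γ)`, and `μ(tr γ) > 0` because the
density `y⁻²` is positive on `D̄ ⊆ ℍ` and `μ D̄ < ∞`. -/

open Bornology MeasureTheory

/-- The hyperbolic area measure on the upper half-plane: `dμ = y⁻² dx dy`. -/
noncomputable def hypMeasure : Measure ℂ :=
  volume.withDensity (fun z => ENNReal.ofReal ((z.im ^ 2)⁻¹))

/-- The closed modular triangle. -/
def closedModularTriangle : Set ℂ :=
  {z : ℂ | 0 < z.im ∧ |z.re| ≤ 1 / 2 ∧ 1 ≤ ‖z‖}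

open Set Complex

lemma measurePreserving_add_hypMeasure {c : ℂ} (hc : c.im = 0) :
    MeasurePreserving (· + c) hypMeasure hypMeasure := by
  refine ⟨measurable_add_const c, Measure.ext fun s hs => ?_⟩
  rw [Measure.map_apply (measurable_add_const c) hs, hypMeasure, withDensity_apply _ hs,
    withDensity_apply _ (hs.preimage (measurable_add_const c)),
    ← (measurePreserving_add_right volume c).setLIntegral_comp_preimage_emb
      (measurableEmbedding_addRight c) _ s]
  simp [hc]

lemma volume_re_preimage_singleton (c : ℝ) : volume (re ⁻¹' {c}) = 0 := by
  rw [show re ⁻¹' {c} = measurableEquivRealProd ⁻¹' ({c} ×ˢ univ) by ext; simp,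
    volume_preserving_equiv_real_prod.measure_preimage
    ((measurableSet_singleton c).prod MeasurableSet.univ).nullMeasurableSet]
  simp [Measure.volume_eq_prod, Measure.prod_prod]

lemma hypMeasure_pos {s : Set ℂ} (hs : s ⊆ {z | 0 < z.im}) (hvol : 0 < volume s) :
    0 < hypMeasure s := by
  have hsupp : Function.support (fun z : ℂ => ENNReal.ofReal ((z.im ^ 2)⁻¹)) ∩ s = s :=
    inter_eq_self_of_subset_right fun z hz => by simpa using (hs hz : 0 < z.im).ne'
  rw [hypMeasure, withDensity_apply', setLIntegral_pos_iff, hsupp]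
  · exact hvol
  · exact ((measurable_im.pow_const 2).inv).ennreal_ofReal

lemma hypMeasure_re_Icc_inter_im_Ioi_lt_top (a b : ℝ) {h : ℝ} (hh : 0 < h) :
    hypMeasure (re ⁻¹' Icc a b ∩ im ⁻¹' Ioi h) < ⊤ := by
  have hint : IntegrableOn (fun y : ℝ => (y ^ 2)⁻¹) (Ioi h) := by
    refine (integrableOn_Ioi_rpow_of_lt (by norm_num : (-2 : ℝ) < -1) hh).congr_fun
      (fun y hy => ?_) measurableSet_Ioi
    simp [Real.rpow_neg (hh.trans hy).le]
  change hypMeasure (measurableEquivRealProd ⁻¹' (Icc a b ×ˢ Ioi h)) < ⊤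
  have hchange := volume_preserving_equiv_real_prod.setLIntegral_comp_preimage_emb
    measurableEquivRealProd.measurableEmbedding (fun p => ENNReal.ofReal ((p.2 ^ 2)⁻¹))
    (Icc a b ×ˢ Ioi h)
  simp only [measurableEquivRealProd_apply] at hchange
  rw [hypMeasure, withDensity_apply', hchange, Measure.volume_eq_prod, ← Measure.prod_restrict,
    lintegral_prod (fun p : ℝ × ℝ => ENNReal.ofReal ((p.2 ^ 2)⁻¹))
      (measurable_snd.pow_const 2).inv.ennreal_ofReal.aemeasurable]
  simp only [lintegral_const, Measure.restrict_apply_univ, Real.volume_Icc]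
  exact ENNReal.mul_lt_top hint.lintegral_lt_top ENNReal.ofReal_lt_top

lemma closedModularTriangle_subset :
    closedModularTriangle ⊆ re ⁻¹' Icc (-(1 / 2)) (1 / 2) ∩ im ⁻¹' Ioi (1 / 2) := by
  rintro z ⟨him, hre, hnorm⟩
  have hnormSq : 1 ≤ z.re ^ 2 + z.im ^ 2 := by
    nlinarith [Complex.sq_norm z, normSq_apply z]
  exact ⟨abs_le.mp hre, show 1 / 2 < z.im by nlinarith [abs_le.mp hre]⟩

lemma hypMeasure_closedModularTriangle_ne_top : hypMeasure closedModularTriangle ≠ ⊤ :=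
  ne_top_of_le_ne_top (hypMeasure_re_Icc_inter_im_Ioi_lt_top _ _ one_half_pos).ne
    (measure_mono closedModularTriangle_subset)

lemma compl_closedModularTriangle : closedModularTriangleᶜ =
    {z | z.im ≤ 0} ∪ Metric.ball 0 1 ∪ {z | 1 / 2 < z.re} ∪ {z | z.re < -(1 / 2)} := by
  ext z
  simp only [closedModularTriangle, mem_compl_iff, mem_ofPred_eq, mem_union, mem_ball_zero_iff,
    abs_le, not_and_or, not_lt, not_le]
  tauto

lemma isPreconnected_compl_closedModularTriangle : IsPreconnected closedModularTriangleᶜ := by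
  rw [compl_closedModularTriangle]
  refine IsPreconnected.union (-1 : ℂ) (by simp) (by norm_num) ?_
    (convex_halfSpace_lt reLm.isLinear _).isPreconnected
  refine IsPreconnected.union (1 : ℂ) (by simp) (by norm_num) ?_
    (convex_halfSpace_gt reLm.isLinear _).isPreconnected
  exact IsPreconnected.union (0 : ℂ) (by simp) (by simp)
    (convex_halfSpace_le imLm.isLinear _).isPreconnected (convex_ball 0 1).isPreconnected

lemma not_isBounded_compl_closedModularTriangle : ¬ IsBounded closedModularTriangleᶜ := by
  rw [isBounded_iff_forall_norm_le]
  rintro ⟨r, hr⟩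
  have hmem : ((|r| + 1 : ℝ) : ℂ) ∈ closedModularTriangleᶜ := fun h => by simpa using h.1
  have := hr _ hmem
  rw [norm_real, Real.norm_of_nonneg (by positivity)] at this
  linarith [le_abs_self r]

lemma closedModularTriangle_inter_image_add_one_subset :
    closedModularTriangle ∩ (· + 1) '' closedModularTriangle ⊆ re ⁻¹' {1 / 2} := by
  rintro _ ⟨hz, w, hw, rfl⟩
  have hz := abs_le.mp hz.2.1
  have hw := abs_le.mp hw.2.1
  simp only [add_re, one_re] at hz ⊢
  simp only [mem_preimage, mem_singleton_iff, add_re, one_re]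
  linarith

lemma IsPreconnected.subset_compl_of_isBounded {X : Type*} [TopologicalSpace X] [Bornology X]
    {s U V : Set X} (hs : IsPreconnected s) (hsb : ¬ IsBounded s) (hU : IsOpen U)
    (hV : IsOpen V) (hUb : IsBounded U) (hUV : Disjoint U V) (hsUV : s ⊆ U ∪ V) : U ⊆ sᶜ := by
  rcases hs.subset_or_subset hU hV hUV hsUV with hsU | hsV
  · exact absurd (hUb.subset hsU) hsb
  · exact fun x hxU hxs => disjoint_left.mp hUV hxU (hsV hxs)

lemma measure_sdiff_union_image_eq_add {α : Type*} [MeasurableSpace α] {μ : Measure α}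
    {f : α → α} (hf : MeasurePreserving f μ μ) (hfe : MeasurableEmbedding f) {D A B : Set α}
    (hA : MeasurableSet A) (hB : MeasurableSet B) (hAD : A ⊆ D) (hBA : Disjoint B A)
    (hnull : μ ((D \ A) ∩ f '' (B ∪ A)) = 0) :
    μ ((D \ A) ∪ f '' (B ∪ A)) = μ D + μ B := by
  have himage : μ (f '' (B ∪ A)) = μ (B ∪ A) := by
    have := hfe.map_apply μ (f '' (B ∪ A))
    rwa [hf.map_eq, preimage_image_eq _ hfe.injective] at this
  calc μ ((D \ A) ∪ f '' (B ∪ A))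
      = μ (D \ A) + μ (f '' (B ∪ A)) :=
        measure_union₀ (hfe.measurableSet_image.mpr (hB.union hA)).nullMeasurableSet hnull
    _ = μ (D \ A) + μ A + μ B := by rw [himage, measure_union hBA hA]; ring
    _ = μ D + μ B := by rw [← measure_sdiff_add_inter D hA, inter_eq_right.mpr hAD]

theorem example4_measure_excess_general
    (K I E : Set ℂ) (hKD : K ⊆ closedModularTriangle)
    (hKpos : 0 < volume K)
    (hIo : IsOpen I) (hEo : IsOpen E)
    (hIb : IsBounded I) (hdisj : Disjoint I E) (hIE : I ∪ E = Kᶜ)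
    (F : Set ℂ) (hF : F = (closedModularTriangle \ I) ∪ (fun z => z + 1) '' (K ∪ I)) :
    hypMeasure F = hypMeasure closedModularTriangle + hypMeasure K ∧
    hypMeasure closedModularTriangle < hypMeasure F := by
  have hKc : IsClosed K := by
    rw [← isOpen_compl_iff, ← hIE]
    exact hIo.union hEo
  have hID : I ⊆ closedModularTriangle := by
    simpa using isPreconnected_compl_closedModularTriangle.subset_compl_of_isBounded
      not_isBounded_compl_closedModularTriangle hIo hEo hIb hdisj
      (hIE ▸ compl_subset_compl.mpr hKD)
  have hnull : hypMeasure ((closedModularTriangle \ I) ∩ (· + 1) '' (K ∪ I)) = 0 :=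
    measure_mono_null ((inter_subset_inter sdiff_subset (image_mono (union_subset hKD hID))).trans
        closedModularTriangle_inter_image_add_one_subset)
      (withDensity_absolutelyContinuous _ _ (volume_re_preimage_singleton _))
  have hFeq : hypMeasure F = hypMeasure closedModularTriangle + hypMeasure K :=
    hF ▸ measure_sdiff_union_image_eq_add (measurePreserving_add_hypMeasure one_im)
      (measurableEmbedding_addRight 1) hIo.measurableSet hKc.measurableSet hID
      (subset_compl_iff_disjoint_left.mp (hIE ▸ subset_union_left)) hnull
  have hKpos' : 0 < hypMeasure K := hypMeasure_pos (fun z hz => (hKD hz).1) hKpos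
  exact ⟨hFeq, hFeq ▸ ENNReal.lt_add_right hypMeasure_closedModularTriangle_ne_top hKpos'.ne'⟩

/-- Example 4: with a Jordan curve of trace `K ⊆ D̄` of positive Lebesgue measure,
`min (Re '' K) = -1/2`, `Re < 1/2` on `K`, and `F = (D̄ \ int γ) ∪ T(tr γ ∪ int γ)`, the
hyperbolic area satisfies `μ F = μ D̄ + μ K > μ D̄`. -/
theorem example4_measure_excess
    (γ : Circle → ℂ) (hcont : Continuous γ) (hinj : Function.Injective γ)
    (K I E : Set ℂ) (hK : K = Set.range γ) (hKD : K ⊆ closedModularTriangle)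
    (hKpos : 0 < volume K)
    (hmin : IsLeast (Complex.re '' K) (-(1 / 2))) (hmax : ∀ z ∈ K, z.re < 1 / 2)
    (hIo : IsOpen I) (hEo : IsOpen E) (hIc : IsConnected I) (hEc : IsConnected E)
    (hIb : IsBounded I) (hEb : ¬ IsBounded E) (hdisj : Disjoint I E) (hIE : I ∪ E = Kᶜ)
    (hfI : frontier I = K) (hfE : frontier E = K)
    (F : Set ℂ) (hF : F = (closedModularTriangle \ I) ∪ (fun z => z + 1) '' (K ∪ I)) :
    hypMeasure F = hypMeasure closedModularTriangle + hypMeasure K ∧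
    hypMeasure closedModularTriangle < hypMeasure F :=
  example4_measure_excess_general K I E hKD hKpos hIo hEo hIb hdisj hIE F hF
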